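/- arXiv:2111.11470 — 4 statements merged into one kernel-verified Lean document; each statement's English description precedes it below -/
import Mathlib

section
/- Let Γ be a finite simple graph, α > 0 a real number, and B ⊊ C ⊊ A ⊆ V(Γ) vertex subsets. If the pair (C,B) is α-safe and the pair (A,C) is α-safe, then the pair (A,B) is α-safe. -/
open Finset

variable {V : Type*} [Fintype V] [DecidableEq V]

/-- The number of edges of `Γ` with both endpoints in `A` and at least one endpoint
in `A \ B`; this is `e(A,B)` from the paper. -/
noncomputable def edgeCount (Γ : SimpleGraph V) (A B : Finset V) : ℕ :=
  Nat.card {e : Sym2 V // e ∈ Γ.edgeSet ∧ (∀ x ∈ e, x ∈ A) ∧ ∃ x ∈ e, x ∈ A ∧ x ∉ B}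

/-- `f_α(A,B) = v(A,B) - α ⬝ e(A,B)`. -/
noncomputable def fW (Γ : SimpleGraph V) (α : ℝ) (A B : Finset V) : ℝ :=
  ((A \ B).card : ℝ) - α * (edgeCount Γ A B : ℝ)

/-- The pair `(A,B)` is `α`-safe. -/
def IsSafe (Γ : SimpleGraph V) (α : ℝ) (A B : Finset V) : Prop :=
  ∀ C : Finset V, B ⊂ C → C ⊆ A → 0 < fW Γ α C B

/-- The pair `(A,B)` is `α`-rigid. -/
def IsRigid (Γ : SimpleGraph V) (α : ℝ) (A B : Finset V) : Prop :=
  ∀ C : Finset V, B ⊆ C → C ⊂ A → fW Γ α A C < 0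

/-- The pair `(A,B)` is `α`-neutral. -/
def IsNeutral (Γ : SimpleGraph V) (α : ℝ) (A B : Finset V) : Prop :=
  (∀ C : Finset V, B ⊂ C → C ⊂ A → 0 < fW Γ α C B) ∧ fW Γ α A B = 0

lemma fW_self (Γ : SimpleGraph V) (α : ℝ) (X : Finset V) : fW Γ α X X = 0 := by
  have h2 : edgeCount Γ X X = 0 := by
    have : IsEmpty {e : Sym2 V // e ∈ Γ.edgeSet ∧ (∀ x ∈ e, x ∈ X) ∧ ∃ x ∈ e, x ∈ X ∧ x ∉ X} := by
      constructor; rintro ⟨e, _, _, x, _, hx, hx'⟩; exact hx' hx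
    simp [edgeCount, Nat.card_of_isEmpty]
  simp [fW, h2]

lemma edgeCount_eq_ncard (Γ : SimpleGraph V) (A B : Finset V) :
    edgeCount Γ A B =
      Set.ncard {e : Sym2 V | e ∈ Γ.edgeSet ∧ (∀ x ∈ e, x ∈ A) ∧ ∃ x ∈ e, x ∈ A ∧ x ∉ B} := rfl

lemma edgeCount_submod (Γ : SimpleGraph V) (B C D : Finset V) :
    edgeCount Γ D B ≤ edgeCount Γ (D ∩ C) B + edgeCount Γ (D ∪ C) C := by
  rw [edgeCount_eq_ncard, edgeCount_eq_ncard, edgeCount_eq_ncard]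
  set S1 : Set (Sym2 V) :=
    {e | e ∈ Γ.edgeSet ∧ (∀ x ∈ e, x ∈ D ∩ C) ∧ ∃ x ∈ e, x ∈ D ∩ C ∧ x ∉ B} with hS1
  set S2 : Set (Sym2 V) :=
    {e | e ∈ Γ.edgeSet ∧ (∀ x ∈ e, x ∈ D ∪ C) ∧ ∃ x ∈ e, x ∈ D ∪ C ∧ x ∉ C} with hS2
  have hsub : {e : Sym2 V | e ∈ Γ.edgeSet ∧ (∀ x ∈ e, x ∈ D) ∧ ∃ x ∈ e, x ∈ D ∧ x ∉ B}
      ⊆ S1 ∪ S2 := by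
    rintro e ⟨he, hall, x, hxe, hxD, hxB⟩
    by_cases hc : ∀ y ∈ e, y ∈ C
    · exact Or.inl ⟨he, fun y hy => mem_inter.mpr ⟨hall y hy, hc y hy⟩,
        x, hxe, mem_inter.mpr ⟨hxD, hc x hxe⟩, hxB⟩
    · push_neg at hc
      obtain ⟨y, hye, hyC⟩ := hc
      exact Or.inr ⟨he, fun z hz => mem_union.mpr (Or.inl (hall z hz)),
        y, hye, mem_union.mpr (Or.inl (hall y hye)), hyC⟩
  calc Set.ncard {e : Sym2 V | e ∈ Γ.edgeSet ∧ (∀ x ∈ e, x ∈ D) ∧ ∃ x ∈ e, x ∈ D ∧ x ∉ B}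
      ≤ Set.ncard (S1 ∪ S2) := Set.ncard_le_ncard hsub (Set.toFinite _)
    _ ≤ Set.ncard S1 + Set.ncard S2 := Set.ncard_union_le _ _

lemma card_split (B C D : Finset V) (hBC : B ⊆ C) :
    (D \ B).card = ((D ∩ C) \ B).card + ((D ∪ C) \ C).card := by
  have hsets : D \ B = ((D ∩ C) \ B) ∪ ((D ∪ C) \ C) := by
    ext x
    simp only [mem_sdiff, mem_union, mem_inter]
    constructor
    · rintro ⟨hxD, hxB⟩
      by_cases hxC : x ∈ C
      · exact Or.inl ⟨⟨hxD, hxC⟩, hxB⟩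
      · exact Or.inr ⟨Or.inl hxD, hxC⟩
    · rintro (⟨⟨hxD, _⟩, hxB⟩ | ⟨hx, hxC⟩)
      · exact ⟨hxD, hxB⟩
      · rcases hx with hxD | hxC'
        · exact ⟨hxD, fun hb => hxC (hBC hb)⟩
        · exact absurd hxC' hxC
  have hdisj : Disjoint ((D ∩ C) \ B) ((D ∪ C) \ C) := by
    rw [Finset.disjoint_left]
    rintro x hx hx'
    exact (mem_sdiff.mp hx').2 (mem_inter.mp (mem_sdiff.mp hx).1).2
  rw [hsets, card_union_of_disjoint hdisj]

/-- transitivity of α-safeness. -/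
theorem stmt1 (Γ : SimpleGraph V) (α : ℝ) (hα : 0 < α) (A B C : Finset V)
    (hBC : B ⊂ C) (hCA : C ⊂ A)
    (hCB : IsSafe Γ α C B) (hAC : IsSafe Γ α A C) :
    IsSafe Γ α A B := by
  intro D hBD hDA
  have key : fW Γ α (D ∩ C) B + fW Γ α (D ∪ C) C ≤ fW Γ α D B := by
    unfold fW
    have hcard : ((D \ B).card : ℝ) = ((D ∩ C) \ B).card + ((D ∪ C) \ C).card := by
      exact_mod_cast congrArg (Nat.cast (R := ℝ)) (card_split B C D hBC.subset)
    have hedge : (edgeCount Γ D B : ℝ) ≤ edgeCount Γ (D ∩ C) B + edgeCount Γ (D ∪ C) C := by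
      exact_mod_cast edgeCount_submod Γ B C D
    nlinarith [mul_le_mul_of_nonneg_left hedge hα.le]
  have hBsub : B ⊆ D ∩ C := subset_inter hBD.subset hBC.subset
  have hDCA : D ∪ C ⊆ A := union_subset hDA hCA.subset
  rcases hBsub.ssubset_or_eq with h1 | h1
  · have f1 : 0 < fW Γ α (D ∩ C) B := hCB _ h1 inter_subset_right
    rcases (subset_union_right : C ⊆ D ∪ C).ssubset_or_eq with h2 | h2
    · have f2 : 0 < fW Γ α (D ∪ C) C := hAC _ h2 hDCA
      linarith
    · have f2 : fW Γ α (D ∪ C) C = 0 := by rw [← h2]; exact fW_self Γ α _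
      linarith
  · have f1 : fW Γ α (D ∩ C) B = 0 := by rw [h1]; exact fW_self Γ α _
    have h2 : C ⊂ D ∪ C := by
      obtain ⟨x, hxD, hxB⟩ := exists_of_ssubset hBD
      refine (ssubset_iff_of_subset subset_union_right).mpr ⟨x, mem_union.mpr (Or.inl hxD), ?_⟩
      intro hxC
      exact hxB (h1 ▸ mem_inter.mpr ⟨hxD, hxC⟩)
    have f2 : 0 < fW Γ α (D ∪ C) C := hAC _ h2 hDCA
    linarith
end

section
/- Let α > 0 be a rational number, Γ a finite simple graph, and U ⊊ A ⊆ V(Γ) nonempty vertex subsets such that the pair (A,U) is α-neutral, ρ^max(Γ|_U) < 1/α, and Γ contains at least one edge with one endpoint in A \ U and the other endpoint in U. Then ρ^max(Γ|_A) < 1/α; equivalently, f_α(C,∅) > 0 for every nonempty C ⊆ A. -/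
open Finset

variable {V : Type*} [Fintype V] [DecidableEq V]

section Stmt6Aux

/-- The edge set underlying `edgeCount`, as a `Set`. -/
def ES (Γ : SimpleGraph V) (A B : Finset V) : Set (Sym2 V) :=
  {e | e ∈ Γ.edgeSet ∧ (∀ x ∈ e, x ∈ A) ∧ ∃ x ∈ e, x ∈ A ∧ x ∉ B}

lemma edgeCount_eq_ncard_s6 (Γ : SimpleGraph V) (A B : Finset V) :
    edgeCount Γ A B = (ES Γ A B).ncard :=
  Nat.card_coe_set_eq _

lemma ES_split (Γ : SimpleGraph V) (C U : Finset V) :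
    ES Γ C ∅ = ES Γ C (C ∩ U) ∪ ES Γ (C ∩ U) ∅ := by
  ext e
  constructor
  · rintro ⟨he, hall, x, hxe, hxC, -⟩
    by_cases h : ∀ y ∈ e, y ∈ U
    · exact Or.inr ⟨he, fun y hy => Finset.mem_inter.2 ⟨hall y hy, h y hy⟩,
        x, hxe, Finset.mem_inter.2 ⟨hxC, h x hxe⟩, Finset.notMem_empty x⟩
    · push_neg at h
      obtain ⟨y, hye, hyU⟩ := h
      exact Or.inl ⟨he, hall, y, hye, hall y hye,
        fun hmem => hyU (Finset.mem_inter.1 hmem).2⟩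
  · rintro (⟨he, hall, x, hxe, hxC, -⟩ | ⟨he, hall, x, hxe, hxC, -⟩)
    · exact ⟨he, hall, x, hxe, hxC, Finset.notMem_empty x⟩
    · exact ⟨he, fun y hy => (Finset.mem_inter.1 (hall y hy)).1,
        x, hxe, (Finset.mem_inter.1 hxC).1, Finset.notMem_empty x⟩

lemma ES_disj (Γ : SimpleGraph V) (C U : Finset V) :
    Disjoint (ES Γ C (C ∩ U)) (ES Γ (C ∩ U) ∅) := by
  rw [Set.disjoint_left]
  rintro e ⟨-, -, x, hxe, -, hx⟩ ⟨-, hall, -⟩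
  exact hx (hall x hxe)

lemma fW_split (Γ : SimpleGraph V) (α : ℝ) (C U : Finset V) :
    fW Γ α C ∅ = fW Γ α C (C ∩ U) + fW Γ α (C ∩ U) ∅ := by
  have hcard : ((C \ ∅).card : ℝ) = ((C \ (C ∩ U)).card : ℝ) + (((C ∩ U) \ ∅).card : ℝ) := by
    rw [Finset.sdiff_empty, Finset.sdiff_empty, Finset.sdiff_inter_self_left]
    norm_cast
    rw [Finset.card_sdiff_add_card_inter]
  have hedge : (edgeCount Γ C ∅ : ℝ) = (edgeCount Γ C (C ∩ U) : ℝ) + (edgeCount Γ (C ∩ U) ∅ : ℝ) := by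
    norm_cast
    rw [edgeCount_eq_ncard_s6, edgeCount_eq_ncard_s6, edgeCount_eq_ncard_s6, ES_split Γ C U,
      Set.ncard_union_eq (ES_disj Γ C U) (Set.toFinite _) (Set.toFinite _)]
  unfold fW
  rw [hcard, hedge]
  ring

lemma ES_mono (Γ : SimpleGraph V) (C U : Finset V) :
    ES Γ C (C ∩ U) ⊆ ES Γ (C ∪ U) U := by
  rintro e ⟨he, hall, x, hxe, hxC, hx⟩
  refine ⟨he, fun y hy => Finset.mem_union_left _ (hall y hy),
    x, hxe, Finset.mem_union_left _ hxC, fun hxU => hx (Finset.mem_inter.2 ⟨hxC, hxU⟩)⟩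

lemma fW_mono (Γ : SimpleGraph V) (α : ℝ) (hα : 0 ≤ α) (C U : Finset V) :
    fW Γ α (C ∪ U) U ≤ fW Γ α C (C ∩ U) := by
  have hv : ((C ∪ U) \ U) = C \ (C ∩ U) := by
    rw [Finset.sdiff_inter_self_left, Finset.union_sdiff_right]
  have he : (edgeCount Γ C (C ∩ U) : ℝ) ≤ (edgeCount Γ (C ∪ U) U : ℝ) := by
    norm_cast
    rw [edgeCount_eq_ncard_s6, edgeCount_eq_ncard_s6]
    exact Set.ncard_le_ncard (ES_mono Γ C U) (Set.toFinite _)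
  unfold fW
  rw [hv]
  nlinarith

lemma fW_empty (Γ : SimpleGraph V) (α : ℝ) : fW Γ α ∅ ∅ = 0 := by
  have h : ES Γ ∅ (∅ : Finset V) = ∅ := by
    ext e
    simp only [ES, Set.mem_setOf_eq, Set.mem_empty_iff_false, iff_false]
    rintro ⟨-, -, x, -, hx, -⟩
    exact Finset.notMem_empty x hx
  simp [fW, edgeCount_eq_ncard_s6, h]

end Stmt6Aux

/-- if `(A,U)` is α-neutral, `ρ^max(Γ|_U) < 1/α`
(equivalently `f_α(C,∅) > 0` for all nonempty `C ⊆ U`) and there is an edge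
between `A \ U` and `U`, then `ρ^max(Γ|_A) < 1/α`, i.e.
`f_α(C,∅) > 0` for every nonempty `C ⊆ A`. -/
theorem stmt6 (Γ : SimpleGraph V) (α : ℚ) (hα : 0 < α) (A U : Finset V)
    (hUne : U.Nonempty) (hUA : U ⊂ A)
    (hneut : IsNeutral Γ (α : ℝ) A U)
    (hdens : ∀ C : Finset V, C ⊆ U → C.Nonempty → 0 < fW Γ (α : ℝ) C ∅)
    (hedge : ∃ x y, Γ.Adj x y ∧ x ∈ A ∧ x ∉ U ∧ y ∈ U) :
    ∀ C : Finset V, C ⊆ A → C.Nonempty → 0 < fW Γ (α : ℝ) C ∅ := by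

  intro C hCA hCne
  by_cases hCU : C ⊆ U
  · exact hdens C hCU hCne
  -- C has a vertex outside U
  have hx0 : ∃ x ∈ C, x ∉ U := by
    by_contra h
    push_neg at h
    exact hCU h
  obtain ⟨x0, hx0C, hx0U⟩ := hx0
  set αr : ℝ := (α : ℝ) with hαr
  have hαpos : (0:ℝ) < αr := Rat.cast_pos.2 hα
  have hsplit := fW_split Γ αr C U
  have hmono := fW_mono Γ αr (le_of_lt hαpos) C U
  have hsubU : U ⊂ C ∪ U := by
    refine ⟨Finset.subset_union_right, fun h => hx0U (h (Finset.mem_union_left _ hx0C))⟩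
  have hCUA : C ∪ U ⊆ A := Finset.union_subset hCA hUA.1
  have hIge : 0 ≤ fW Γ αr (C ∩ U) ∅ := by
    rcases (C ∩ U).eq_empty_or_nonempty with h | h
    · rw [h, fW_empty]
    · exact le_of_lt (hdens _ Finset.inter_subset_right h)
  by_cases hEq : C ∪ U = A
  · rcases (C ∩ U).eq_empty_or_nonempty with hI | hI
    · -- C = A \ U ; use strict edge inequality from the cross edge
      have hCeq : C = A \ U := by
        rw [← hEq, Finset.union_sdiff_right]
        symm
        rw [Finset.sdiff_eq_self_iff_disjoint, Finset.disjoint_left]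
        intro a haC haU
        exact absurd hI (Finset.ne_empty_of_mem (Finset.mem_inter.2 ⟨haC, haU⟩))
      obtain ⟨x, y, hadj, hxA, hxU, hyU⟩ := hedge
      have hssub : ES Γ C ∅ ⊂ ES Γ A U := by
        constructor
        · rintro e ⟨he, hall, z, hze, hzC, -⟩
          refine ⟨he, fun w hw => hCA (hall w hw), z, hze, hCA hzC, ?_⟩
          have := hall z hze
          rw [hCeq] at this
          exact (Finset.mem_sdiff.1 this).2
        · intro hsup
          have hwmem : s(x, y) ∈ ES Γ A U := by
            refine ⟨Γ.mem_edgeSet.2 hadj, ?_, x, ?_, hxA, hxU⟩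
            · intro z hz
              rcases Sym2.mem_iff.1 hz with rfl | rfl
              · exact hxA
              · exact hUA.1 hyU
            · exact Sym2.mem_mk_left x y
          obtain ⟨-, hall, -⟩ := hsup hwmem
          have : y ∈ C := hall y (Sym2.mem_mk_right x y)
          rw [hCeq] at this
          exact (Finset.mem_sdiff.1 this).2 hyU
      have hlt : (edgeCount Γ C ∅ : ℝ) < (edgeCount Γ A U : ℝ) := by
        have : edgeCount Γ C ∅ < edgeCount Γ A U := by
          rw [edgeCount_eq_ncard_s6, edgeCount_eq_ncard_s6]
          exact Set.ncard_lt_ncard hssub (Set.toFinite _)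
        exact_mod_cast this
      have hv : ((C \ (∅ : Finset V)).card : ℝ) = ((A \ U).card : ℝ) := by
        rw [Finset.sdiff_empty, hCeq]
      have h0 : fW Γ αr A U = 0 := hneut.2
      unfold fW at h0 ⊢
      rw [hv]
      nlinarith
    · -- C ∩ U nonempty
      have h1 : 0 < fW Γ αr (C ∩ U) ∅ := hdens _ Finset.inter_subset_right hI
      have h0 : fW Γ αr A U = 0 := hneut.2
      rw [hEq] at hmono
      linarith
  · have h1 : 0 < fW Γ αr (C ∪ U) U :=
      hneut.1 (C ∪ U) hsubU ⟨hCUA, fun h => hEq (Finset.Subset.antisymm hCUA h)⟩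
    linarith
end

section
/- Let Γ be a finite simple graph, z ∈ V(Γ), and {z} ⊆ A_0 ⊊ A_1 ⊊ ⋯ ⊊ A_5 ⊆ V(Γ) vertex subsets such that f_{3/5}(A_0,{z}) ≤ 0 and f_{3/5}(A_i,A_{i−1}) < 0 for every i ∈ {1,…,5}. Then the induced subgraph Γ|_{A_5} has at least (5/3)·|A_5| edges; in particular ρ^max(Γ|_{A_5}) ≥ 5/3. -/
open Finset

variable {V : Type*} [Fintype V] [DecidableEq V]

set_option linter.unusedSectionVars false

lemma edgeCount_mono (Γ : SimpleGraph V) {A B C : Finset V} (h : C ⊆ B) :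
    edgeCount Γ A B ≤ edgeCount Γ A C := by
  apply Nat.card_le_card_of_injective
    (fun x => ⟨x.1, x.2.1, x.2.2.1, by
      obtain ⟨w, hw, hwA, hwB⟩ := x.2.2.2
      exact ⟨w, hw, hwA, fun hc => hwB (h hc)⟩⟩)
  intro a b hab
  simp only [Subtype.mk.injEq] at hab
  exact Subtype.ext hab

lemma edgeCount_add_le (Γ : SimpleGraph V) {A B C : Finset V} (hCB : C ⊆ B) (hBA : B ⊆ A) :
    edgeCount Γ A B + edgeCount Γ B C ≤ edgeCount Γ A C := by
  rw [edgeCount, edgeCount, edgeCount, ← Nat.card_sum]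
  apply Nat.card_le_card_of_injective
    (Sum.elim
      (fun x => ⟨x.1, x.2.1, x.2.2.1, by
        obtain ⟨w, hw, hwA, hwB⟩ := x.2.2.2
        exact ⟨w, hw, hwA, fun hc => hwB (hCB hc)⟩⟩)
      (fun x => ⟨x.1, x.2.1, fun y hy => hBA (x.2.2.1 y hy), by
        obtain ⟨w, hw, hwB, hwC⟩ := x.2.2.2
        exact ⟨w, hw, hBA hwB, hwC⟩⟩))
  rintro (a | a) (b | b) hab <;> simp only [Sum.elim_inl, Sum.elim_inr, Subtype.mk.injEq] at hab
  · exact congrArg Sum.inl (Subtype.ext hab)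
  · obtain ⟨w, hw, hwA, hwB⟩ := a.2.2.2
    exact absurd (b.2.2.1 w (hab ▸ hw)) hwB
  · obtain ⟨w, hw, hwA, hwB⟩ := b.2.2.2
    exact absurd (a.2.2.1 w (hab.symm ▸ hw)) hwB
  · exact congrArg Sum.inr (Subtype.ext hab)

lemma fW_tri (Γ : SimpleGraph V) {α : ℝ} (hα : 0 ≤ α) {A B C : Finset V}
    (hCB : C ⊆ B) (hBA : B ⊆ A) :
    fW Γ α A C ≤ fW Γ α A B + fW Γ α B C := by
  have hcard : (A \ C).card = (A \ B).card + (B \ C).card := by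
    rw [card_sdiff_of_subset hCB, card_sdiff_of_subset hBA, card_sdiff_of_subset (hCB.trans hBA)]
    have := card_le_card hCB; have := card_le_card hBA; omega
  have hE := edgeCount_add_le Γ hCB hBA
  unfold fW
  rw [hcard]
  push_cast
  have : (edgeCount Γ A B : ℝ) + edgeCount Γ B C ≤ edgeCount Γ A C := by exact_mod_cast hE
  nlinarith

lemma fW_fifth (Γ : SimpleGraph V) {A B : Finset V} (h : fW Γ (3/5) A B < 0) :
    fW Γ (3/5) A B ≤ -(1/5) := by
  unfold fW at *
  set v := (A \ B).card
  set e := edgeCount Γ A B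
  have h5 : 5 * v < 3 * e := by
    have : (5 * v : ℝ) < 3 * e := by linarith
    exact_mod_cast this
  have : (5 * v + 1 : ℝ) ≤ 3 * e := by exact_mod_cast h5
  linarith

/-- a chain `{z} ⊆ A₀ ⊊ A₁ ⊊ ⋯ ⊊ A₅` with `f_{3/5}(A₀,{z}) ≤ 0` and
`f_{3/5}(Aᵢ,Aᵢ₋₁) < 0` forces `e(Γ|_{A₅}) ≥ (5/3)·|A₅|`; in particular
`ρ^max(Γ|_{A₅}) ≥ 5/3`. -/
theorem stmt7 (Γ : SimpleGraph V) (z : V) (A0 A1 A2 A3 A4 A5 : Finset V)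
    (hz : {z} ⊆ A0)
    (h01 : A0 ⊂ A1) (h12 : A1 ⊂ A2) (h23 : A2 ⊂ A3) (h34 : A3 ⊂ A4) (h45 : A4 ⊂ A5)
    (hf0 : fW Γ (3/5) A0 {z} ≤ 0)
    (hf1 : fW Γ (3/5) A1 A0 < 0) (hf2 : fW Γ (3/5) A2 A1 < 0)
    (hf3 : fW Γ (3/5) A3 A2 < 0) (hf4 : fW Γ (3/5) A4 A3 < 0)
    (hf5 : fW Γ (3/5) A5 A4 < 0) :
    (5/3 : ℝ) * A5.card ≤ (edgeCount Γ A5 ∅ : ℝ) ∧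
    ∃ S : Finset V, S ⊆ A5 ∧ S.Nonempty ∧
      (5/3 : ℝ) ≤ (edgeCount Γ S ∅ : ℝ) / S.card := by

  have hα : (0:ℝ) ≤ 3/5 := by norm_num
  have s01 := h01.subset; have s12 := h12.subset; have s23 := h23.subset
  have s34 := h34.subset; have s45 := h45.subset
  have hz1 : ({z} : Finset V) ⊆ A1 := hz.trans s01
  have hz2 : ({z} : Finset V) ⊆ A2 := hz1.trans s12
  have hz3 : ({z} : Finset V) ⊆ A3 := hz2.trans s23
  have hz4 : ({z} : Finset V) ⊆ A4 := hz3.trans s34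
  have hz5 : ({z} : Finset V) ⊆ A5 := hz4.trans s45
  have t1 := fW_tri Γ hα hz s01
  have t2 := fW_tri Γ hα hz1 s12
  have t3 := fW_tri Γ hα hz2 s23
  have t4 := fW_tri Γ hα hz3 s34
  have t5 := fW_tri Γ hα hz4 s45
  have g1 := fW_fifth Γ hf1
  have g2 := fW_fifth Γ hf2
  have g3 := fW_fifth Γ hf3
  have g4 := fW_fifth Γ hf4
  have g5 := fW_fifth Γ hf5
  have hfin : fW Γ (3/5) A5 {z} ≤ -1 := by linarith
  have hzA5 : z ∈ A5 := hz5 (mem_singleton_self z)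
  have hcard : (A5 \ {z}).card = A5.card - 1 := by
    rw [card_sdiff_of_subset (by simpa using hzA5)]; simp
  have hcpos : 1 ≤ A5.card := card_pos.mpr ⟨z, hzA5⟩
  have hmono : edgeCount Γ A5 {z} ≤ edgeCount Γ A5 ∅ := edgeCount_mono Γ (empty_subset _)
  have hmonoR : (edgeCount Γ A5 {z} : ℝ) ≤ edgeCount Γ A5 ∅ := by exact_mod_cast hmono
  have hcR : ((A5 \ {z}).card : ℝ) = (A5.card : ℝ) - 1 := by
    rw [hcard]; push_cast [hcpos]; ring
  unfold fW at hfin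
  rw [hcR] at hfin
  have key : (5/3 : ℝ) * A5.card ≤ (edgeCount Γ A5 ∅ : ℝ) := by linarith
  refine ⟨key, A5, subset_rfl, ⟨z, hzA5⟩, ?_⟩
  rw [le_div_iff₀ (by exact_mod_cast hcpos)]
  linarith
end

section
/- Let Γ be a finite simple graph, z ∈ V(Γ), i ≥ 1 an integer, and {z} ⊊ A_0 ⊊ A_1 ⊊ ⋯ ⊊ A_i ⊆ V(Γ) vertex subsets such that the pair (A_0,{z}) is 3/5-neutral or 3/5-rigid, the pair (A_j,A_{j−1}) is 3/5-rigid for every j ∈ {1,…,i}, and Γ contains at least one edge with one endpoint in A_0 \ {z} and the other endpoint in A_1 \ A_0. Then the pair (A_i,{z}) is 3/5-rigid. -/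
open Finset

variable {V : Type*} [Fintype V] [DecidableEq V]

set_option linter.unusedSectionVars false

lemma edgeCount_add (Γ : SimpleGraph V) {A B C : Finset V} (hBC : B ⊆ C) (hCA : C ⊆ A) :
    edgeCount Γ A B = edgeCount Γ A C + edgeCount Γ C B := by
  rw [edgeCount_eq_ncard, edgeCount_eq_ncard, edgeCount_eq_ncard]
  have hU : {e : Sym2 V | e ∈ Γ.edgeSet ∧ (∀ x ∈ e, x ∈ A) ∧ ∃ x ∈ e, x ∈ A ∧ x ∉ B}
      = {e : Sym2 V | e ∈ Γ.edgeSet ∧ (∀ x ∈ e, x ∈ A) ∧ ∃ x ∈ e, x ∈ A ∧ x ∉ C}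
      ∪ {e : Sym2 V | e ∈ Γ.edgeSet ∧ (∀ x ∈ e, x ∈ C) ∧ ∃ x ∈ e, x ∈ C ∧ x ∉ B} := by
    ext e
    induction e using Sym2.ind with
    | _ a b =>
      have ha1 : a ∈ B → a ∈ C := fun h => hBC h
      have hb1 : b ∈ B → b ∈ C := fun h => hBC h
      have ha2 : a ∈ C → a ∈ A := fun h => hCA h
      have hb2 : b ∈ C → b ∈ A := fun h => hCA h
      simp only [Set.mem_setOf_eq, Set.mem_union, Sym2.mem_iff, forall_eq_or_imp, forall_eq,
        or_and_right, exists_or, exists_eq_left]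
      constructor
      · rintro ⟨he, ⟨ha, hb⟩, hw⟩
        by_cases haC : a ∈ C
        · by_cases hbC : b ∈ C
          · refine Or.inr ⟨he, ⟨haC, hbC⟩, ?_⟩
            exact hw.imp (fun h => ⟨haC, h.2⟩) (fun h => ⟨hbC, h.2⟩)
          · exact Or.inl ⟨he, ⟨ha, hb⟩, Or.inr ⟨hb, hbC⟩⟩
        · exact Or.inl ⟨he, ⟨ha, hb⟩, Or.inl ⟨ha, haC⟩⟩
      · rintro (⟨he, hab, hw⟩ | ⟨he, ⟨haC, hbC⟩, hw⟩)
        · exact ⟨he, hab, hw.imp (fun h => ⟨h.1, fun hB => h.2 (ha1 hB)⟩)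
            (fun h => ⟨h.1, fun hB => h.2 (hb1 hB)⟩)⟩
        · exact ⟨he, ⟨ha2 haC, hb2 hbC⟩, hw.imp (fun h => ⟨ha2 h.1, h.2⟩)
            (fun h => ⟨hb2 h.1, h.2⟩)⟩
  have hD : Disjoint {e : Sym2 V | e ∈ Γ.edgeSet ∧ (∀ x ∈ e, x ∈ A) ∧ ∃ x ∈ e, x ∈ A ∧ x ∉ C}
      {e : Sym2 V | e ∈ Γ.edgeSet ∧ (∀ x ∈ e, x ∈ C) ∧ ∃ x ∈ e, x ∈ C ∧ x ∉ B} := by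
    rw [Set.disjoint_left]
    rintro e ⟨-, -, x, hxe, -, hxC⟩ ⟨-, hall, -⟩
    exact hxC (hall x hxe)
  rw [hU, Set.ncard_union_eq hD]

lemma card_sdiff_add {A B C : Finset V} (hBC : B ⊆ C) (hCA : C ⊆ A) :
    (A \ B).card = (A \ C).card + (C \ B).card := by
  rw [card_sdiff_of_subset (hBC.trans hCA), card_sdiff_of_subset hCA, card_sdiff_of_subset hBC]
  have h1 := card_le_card hBC
  have h2 := card_le_card hCA
  omega

lemma fW_add (Γ : SimpleGraph V) (α : ℝ) {A B C : Finset V} (hBC : B ⊆ C) (hCA : C ⊆ A) :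
    fW Γ α A B = fW Γ α A C + fW Γ α C B := by
  unfold fW
  rw [edgeCount_add Γ hBC hCA, card_sdiff_add hBC hCA]
  push_cast
  ring

lemma edgeSet_subset_lemma (Γ : SimpleGraph V) {A₀ B C : Finset V} (hCB : C ∩ A₀ ⊆ B) :
    {e : Sym2 V | e ∈ Γ.edgeSet ∧ (∀ x ∈ e, x ∈ A₀) ∧ ∃ x ∈ e, x ∈ A₀ ∧ x ∉ B}
      ⊆ {e : Sym2 V | e ∈ Γ.edgeSet ∧ (∀ x ∈ e, x ∈ C ∪ A₀) ∧ ∃ x ∈ e, x ∈ C ∪ A₀ ∧ x ∉ C} := by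
  rintro e ⟨he, hall, x, hxe, hxA, hxB⟩
  exact ⟨he, fun y hy => mem_union_right _ (hall y hy), x, hxe, mem_union_right _ hxA,
    fun hxC => hxB (hCB (mem_inter.2 ⟨hxC, hxA⟩))⟩

lemma sdiff_union_eq (C A₀ : Finset V) : (C ∪ A₀) \ C = A₀ \ (C ∩ A₀) := by
  ext x
  simp only [mem_sdiff, mem_union, mem_inter]
  tauto

lemma fW_union_le (Γ : SimpleGraph V) {α : ℝ} (hα : 0 ≤ α) (C A₀ : Finset V) :
    fW Γ α (C ∪ A₀) C ≤ fW Γ α A₀ (C ∩ A₀) := by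
  unfold fW
  rw [sdiff_union_eq]
  have h : edgeCount Γ A₀ (C ∩ A₀) ≤ edgeCount Γ (C ∪ A₀) C := by
    rw [edgeCount_eq_ncard, edgeCount_eq_ncard]
    exact Set.ncard_le_ncard (edgeSet_subset_lemma Γ (le_refl _)) (Set.toFinite _)
  have := mul_le_mul_of_nonneg_left (Nat.cast_le.2 h : (_:ℝ) ≤ _) hα
  linarith

lemma edgeCount_succ_le (Γ : SimpleGraph V) {A₀ B C : Finset V} {x y : V}
    (hCB : C ∩ A₀ ⊆ B) (hadj : Γ.Adj x y) (hx : x ∈ A₀) (hxC : x ∉ C)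
    (hy : y ∈ C ∪ A₀) (hyA : y ∉ A₀) :
    edgeCount Γ A₀ B + 1 ≤ edgeCount Γ (C ∪ A₀) C := by
  rw [edgeCount_eq_ncard, edgeCount_eq_ncard]
  set S : Set (Sym2 V) :=
    {e : Sym2 V | e ∈ Γ.edgeSet ∧ (∀ x ∈ e, x ∈ A₀) ∧ ∃ x ∈ e, x ∈ A₀ ∧ x ∉ B} with hS
  have hnot : s(x, y) ∉ S := by
    rintro ⟨-, hall, -⟩
    exact hyA (hall y (Sym2.mem_mk_right x y))
  have hmem : s(x, y) ∈ {e : Sym2 V | e ∈ Γ.edgeSet ∧ (∀ x ∈ e, x ∈ C ∪ A₀)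
      ∧ ∃ x ∈ e, x ∈ C ∪ A₀ ∧ x ∉ C} := by
    refine ⟨hadj, ?_, x, Sym2.mem_mk_left x y, mem_union_right _ hx, hxC⟩
    intro w hw
    rcases Sym2.mem_iff.1 hw with rfl | rfl
    · exact mem_union_right _ hx
    · exact hy
  have hsub : insert s(x, y) S ⊆ {e : Sym2 V | e ∈ Γ.edgeSet ∧ (∀ x ∈ e, x ∈ C ∪ A₀)
      ∧ ∃ x ∈ e, x ∈ C ∪ A₀ ∧ x ∉ C} := by
    rw [Set.insert_subset_iff]
    exact ⟨hmem, edgeSet_subset_lemma Γ hCB⟩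
  calc S.ncard + 1 = (insert s(x, y) S).ncard :=
        (Set.ncard_insert_of_notMem hnot (Set.toFinite _)).symm
    _ ≤ _ := Set.ncard_le_ncard hsub (Set.toFinite _)

lemma rigid_trans (Γ : SimpleGraph V) {α : ℝ} (hα : 0 ≤ α) {A₁ A₀ B : Finset V}
    (hBA : B ⊆ A₀) (hAA : A₀ ⊆ A₁)
    (h1 : IsRigid Γ α A₁ A₀) (h0 : IsRigid Γ α A₀ B) : IsRigid Γ α A₁ B := by
  intro C hBC hCA
  by_cases hA₀C : A₀ ⊆ C
  · exact h1 C hA₀C hCA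
  · have hD : C ∪ A₀ ⊆ A₁ := union_subset hCA.1 hAA
    have hint : C ∩ A₀ ⊂ A₀ := by
      rw [Finset.ssubset_def]
      exact ⟨inter_subset_right, fun h => hA₀C fun x hx => (mem_inter.1 (h hx)).1⟩
    have h2 : fW Γ α A₀ (C ∩ A₀) < 0 := h0 _ (subset_inter hBC hBA) hint
    have hsub : fW Γ α (C ∪ A₀) C ≤ fW Γ α A₀ (C ∩ A₀) := fW_union_le Γ hα C A₀
    by_cases hDA : C ∪ A₀ = A₁
    · calc fW Γ α A₁ C = fW Γ α (C ∪ A₀) C := by rw [hDA]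
        _ ≤ fW Γ α A₀ (C ∩ A₀) := hsub
        _ < 0 := h2
    · have hDss : C ∪ A₀ ⊂ A₁ := lt_of_le_of_ne hD hDA
      have h3 : fW Γ α A₁ (C ∪ A₀) < 0 := h1 _ subset_union_right hDss
      have hadd : fW Γ α A₁ C = fW Γ α A₁ (C ∪ A₀) + fW Γ α (C ∪ A₀) C :=
        fW_add Γ α subset_union_left hD
      linarith

lemma base_neutral (Γ : SimpleGraph V) {z : V} {A₀ A₁ : Finset V}
    (hz : ({z} : Finset V) ⊂ A₀) (hA : A₀ ⊂ A₁)
    (hn : IsNeutral Γ (3/5) A₀ {z}) (h1 : IsRigid Γ (3/5) A₁ A₀)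
    {x y : V} (hadj : Γ.Adj x y) (hx : x ∈ A₀) (hxz : x ≠ z) (hy : y ∈ A₁) (hyA : y ∉ A₀) :
    IsRigid Γ (3/5) A₁ {z} := by
  have hzA : z ∈ A₀ := hz.1 (mem_singleton_self z)
  intro C hzC hCA
  by_cases hA₀C : A₀ ⊆ C
  · exact h1 C hA₀C hCA
  · have hD : C ∪ A₀ ⊆ A₁ := union_subset hCA.1 hA.1
    have hint : C ∩ A₀ ⊂ A₀ := by
      rw [Finset.ssubset_def]
      exact ⟨inter_subset_right, fun h => hA₀C fun w hw => (mem_inter.1 (h hw)).1⟩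
    have hzint : ({z} : Finset V) ⊆ C ∩ A₀ :=
      subset_inter hzC (singleton_subset_iff.2 hzA)
    have hsub : fW Γ (3/5) (C ∪ A₀) C ≤ fW Γ (3/5) A₀ (C ∩ A₀) :=
      fW_union_le Γ (by norm_num) C A₀
    have hstrict : C ∩ A₀ ≠ {z} → fW Γ (3/5) A₀ (C ∩ A₀) < 0 := by
      intro hne
      have hss : ({z} : Finset V) ⊂ C ∩ A₀ := lt_of_le_of_ne hzint (Ne.symm hne)
      have hpos := hn.1 _ hss hint
      have hadd : fW Γ (3/5) A₀ {z} = fW Γ (3/5) A₀ (C ∩ A₀) + fW Γ (3/5) (C ∩ A₀) {z} :=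
        fW_add Γ _ hzint inter_subset_right
      rw [hn.2] at hadd
      linarith
    by_cases hDA : C ∪ A₀ = A₁
    · by_cases hzeq : C ∩ A₀ = {z}
      · -- strict edge case
        have hxC : x ∉ C := by
          intro h
          have : x ∈ C ∩ A₀ := mem_inter.2 ⟨h, hx⟩
          rw [hzeq, mem_singleton] at this
          exact hxz this
        have hec : edgeCount Γ A₀ {z} + 1 ≤ edgeCount Γ (C ∪ A₀) C :=
          edgeCount_succ_le Γ hzeq.le hadj hx hxC (hDA ▸ hy) hyA
        have hv : (((C ∪ A₀) \ C).card : ℝ) = ((A₀ \ ({z} : Finset V)).card : ℝ) := by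
          rw [sdiff_union_eq, hzeq]
        have hfz : fW Γ (3/5) A₀ {z} = 0 := hn.2
        have hec' : (edgeCount Γ A₀ {z} : ℝ) + 1 ≤ (edgeCount Γ (C ∪ A₀) C : ℝ) := by
          exact_mod_cast hec
        rw [← hDA]
        unfold fW at hfz ⊢
        rw [hv]
        nlinarith
      · rw [← hDA]
        exact lt_of_le_of_lt hsub (hstrict hzeq)
    · have hDss : C ∪ A₀ ⊂ A₁ := lt_of_le_of_ne hD hDA
      have h3 : fW Γ (3/5) A₁ (C ∪ A₀) < 0 := h1 _ subset_union_right hDss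
      have hadd : fW Γ (3/5) A₁ C = fW Γ (3/5) A₁ (C ∪ A₀) + fW Γ (3/5) (C ∪ A₀) C :=
        fW_add Γ _ subset_union_left hD
      have hle : fW Γ (3/5) A₀ (C ∩ A₀) ≤ 0 := by
        by_cases hzeq : C ∩ A₀ = {z}
        · rw [hzeq]; exact le_of_eq hn.2
        · exact (hstrict hzeq).le
      linarith

/-- Property 4 of the paper: along a chain
`{z} ⊊ A₀ ⊊ A₁ ⊊ ⋯ ⊊ Aᵢ` (with `i ≥ 1`) with `(A₀,{z})` 3/5-neutral or 3/5-rigid,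
each `(Aⱼ,Aⱼ₋₁)` 3/5-rigid, and an edge between `A₀ \ {z}` and `A₁ \ A₀`, the
pair `(Aᵢ,{z})` is 3/5-rigid. -/
theorem stmt9 (Γ : SimpleGraph V) (z : V) (i : ℕ) (hi : 1 ≤ i) (A : ℕ → Finset V)
    (hz : ({z} : Finset V) ⊂ A 0)
    (hchain : ∀ j < i, A j ⊂ A (j + 1))
    (h0 : IsNeutral Γ (3/5) (A 0) {z} ∨ IsRigid Γ (3/5) (A 0) {z})
    (hrig : ∀ j < i, IsRigid Γ (3/5) (A (j + 1)) (A j))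
    (hedge : ∃ x y, Γ.Adj x y ∧ x ∈ A 0 ∧ x ≠ z ∧ y ∈ A 1 ∧ y ∉ A 0) :
    IsRigid Γ (3/5) (A i) {z} := by
  obtain ⟨x, y, hadj, hx, hxz, hy, hyA⟩ := hedge
  have base1 : IsRigid Γ (3/5) (A 1) {z} := by
    rcases h0 with hneu | hrig0
    · exact base_neutral Γ hz (hchain 0 hi) hneu (hrig 0 hi) hadj hx hxz hy hyA
    · exact rigid_trans Γ (by norm_num) hz.1 (hchain 0 hi).1 (hrig 0 hi) hrig0
  have hmono : ∀ k, k ≤ i → ({z} : Finset V) ⊆ A k := by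
    intro k
    induction k with
    | zero => exact fun _ => hz.1
    | succ n ih =>
      intro h
      exact (ih (Nat.le_of_succ_le h)).trans (hchain n (Nat.lt_of_succ_le h)).1
  have key : ∀ k, k + 1 ≤ i → IsRigid Γ (3/5) (A (k + 1)) {z} := by
    intro k
    induction k with
    | zero => exact fun _ => base1
    | succ n ih =>
      intro h
      have hn : n + 1 < i := Nat.lt_of_succ_le h
      exact rigid_trans Γ (by norm_num) (hmono (n + 1) hn.le) (hchain (n + 1) hn).1
        (hrig (n + 1) hn) (ih hn.le)
  obtain ⟨n, rfl⟩ : ∃ n, i = n + 1 := ⟨i - 1, (Nat.succ_pred_eq_of_pos hi).symm⟩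
  exact key n le_rfl
end
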